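/- arXiv:1304.0760 — 5 statements merged into one kernel-verified Lean document; each statement's English description precedes it below -/
import Mathlib

section
/- If ∃ is an existential quantifier on an MV algebra A, then the operation ∀a := ¬∃¬a satisfies: ∀1 = 1, ∀a ≤ a, ∀(a ⊕ ∀b) = ∀a ⊕ ∀b, ∀(a ⊙ ∀b) = ∀a ⊙ ∀b, ∀(a ⊕ a) = ∀a ⊕ ∀a, and ∀(a ⊙ a) = ∀a ⊙ ∀a. -/
/-- An MV algebra: (A, ⊕, ⊙, ¬, 0, 1) satisfying Chang's axioms. -/
structure MVAlg (A : Type*) where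
  add : A → A → A
  mul : A → A → A
  neg : A → A
  zero : A
  one : A
  add_comm : ∀ a b, add a b = add b a
  mul_comm : ∀ a b, mul a b = mul b a
  add_assoc : ∀ a b c, add a (add b c) = add (add a b) c
  mul_assoc : ∀ a b c, mul a (mul b c) = mul (mul a b) c
  add_zero : ∀ a, add a zero = a
  mul_one : ∀ a, mul a one = a
  add_one : ∀ a, add a one = one
  mul_zero : ∀ a, mul a zero = zero
  add_neg : ∀ a, add a (neg a) = one
  mul_neg : ∀ a, mul a (neg a) = zero
  neg_add : ∀ a b, neg (add a b) = mul (neg a) (neg b)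
  neg_mul : ∀ a b, neg (mul a b) = add (neg a) (neg b)
  neg_neg : ∀ a, neg (neg a) = a
  neg_zero : neg zero = one
  chang : ∀ a b, add (neg (add (neg a) b)) b = add (neg (add (neg b) a)) a

namespace MVAlg
variable {A : Type*} (M : MVAlg A)
/-- The MV order: a ≤ b iff ¬a ⊕ b = 1. -/
def le (a b : A) : Prop := M.add (M.neg a) b = M.one
/-- Weak conjunction: a ∧ b = a ⊙ (¬a ⊕ b). -/
def inf (a b : A) : A := M.mul a (M.add (M.neg a) b)
end MVAlg

/-- An existential quantifier on an MV algebra. -/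
structure ExQuant {A : Type*} (M : MVAlg A) where
  E : A → A
  E_zero : E M.zero = M.zero
  le_E : ∀ a, M.le a (E a)
  E_mul : ∀ a b, E (M.mul a (E b)) = M.mul (E a) (E b)
  E_add : ∀ a b, E (M.add a (E b)) = M.add (E a) (E b)
  E_mul_self : ∀ a, E (M.mul a a) = M.mul (E a) (E a)
  E_add_self : ∀ a, E (M.add a a) = M.add (E a) (E a)

/-- The universal quantifier ∀a := ¬∃¬a derived from an existential quantifier
satisfies the dual axioms. -/
theorem forall_quantifier {A : Type*} (M : MVAlg A) (Q : ExQuant M) :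
    (M.neg (Q.E (M.neg M.one)) = M.one) ∧
    (∀ a, M.le (M.neg (Q.E (M.neg a))) a) ∧
    (∀ a b, M.neg (Q.E (M.neg (M.add a (M.neg (Q.E (M.neg b)))))) =
      M.add (M.neg (Q.E (M.neg a))) (M.neg (Q.E (M.neg b)))) ∧
    (∀ a b, M.neg (Q.E (M.neg (M.mul a (M.neg (Q.E (M.neg b)))))) =
      M.mul (M.neg (Q.E (M.neg a))) (M.neg (Q.E (M.neg b)))) ∧
    (∀ a, M.neg (Q.E (M.neg (M.add a a))) =
      M.add (M.neg (Q.E (M.neg a))) (M.neg (Q.E (M.neg a)))) ∧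
    (∀ a, M.neg (Q.E (M.neg (M.mul a a))) =
      M.mul (M.neg (Q.E (M.neg a))) (M.neg (Q.E (M.neg a)))) := by
  have hone : M.neg M.one = M.zero := by
    rw [← M.neg_zero, M.neg_neg]
  refine ⟨?_, ?_, ?_, ?_, ?_, ?_⟩
  · rw [hone, Q.E_zero, M.neg_zero]
  · intro a
    have h := Q.le_E (M.neg a)
    unfold MVAlg.le at *
    rw [M.neg_neg] at h
    rw [M.neg_neg, M.add_comm, h]
  · intro a b
    rw [M.neg_add, M.neg_neg, Q.E_mul, M.neg_mul]
  · intro a b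
    rw [M.neg_mul, M.neg_neg, Q.E_add, M.neg_add]
  · intro a
    rw [M.neg_add, Q.E_mul_self, M.neg_mul]
  · intro a
    rw [M.neg_mul, Q.E_add_self, M.neg_add]
end

section
/- Let I, X be sets and let A be the set of all functions ^IX → [0,1] where [0,1] carries the standard MV structure. With pointwise MV operations, substitutions s_τ p (x) = p(x ∘ τ) for τ ∈ ^II, and cylindrifications c_{(J)} p (x) = sup { p(y) : y agrees with x off J }, the resulting structure satisfies all axioms of a polyadic MV algebra (with G = ^II and T = ℘(I)). -/
noncomputable section

/-- min(x+y,1) on [0,1]. -/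
def uadd (a b : unitInterval) : unitInterval :=
  ⟨min ((a : ℝ) + b) 1, ⟨le_min (add_nonneg a.2.1 b.2.1) zero_le_one, min_le_right _ _⟩⟩

/-- max(x+y-1,0) on [0,1]. -/
def umul (a b : unitInterval) : unitInterval :=
  ⟨max ((a : ℝ) + b - 1) 0, ⟨le_max_right _ _,
    max_le (by linarith [a.2.2, b.2.2]) zero_le_one⟩⟩

/-- 1 - x on [0,1]. -/
def uneg (a : unitInterval) : unitInterval :=
  ⟨1 - (a : ℝ), ⟨by linarith [a.2.2], by linarith [a.2.1]⟩⟩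

variable {I X : Type*}

/-- Pointwise strong disjunction on [0,1]-valued functions. -/
def Fadd (p q : (I → X) → unitInterval) : (I → X) → unitInterval := fun x => uadd (p x) (q x)

/-- Pointwise strong conjunction. -/
def Fmul (p q : (I → X) → unitInterval) : (I → X) → unitInterval := fun x => umul (p x) (q x)

/-- Pointwise negation. -/
def Fneg (p : (I → X) → unitInterval) : (I → X) → unitInterval := fun x => uneg (p x)

/-- Substitution: (s_τ p)(x) = p(x ∘ τ). -/
def Fs (τ : I → I) (p : (I → X) → unitInterval) : (I → X) → unitInterval :=
  fun x => p (x ∘ τ)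

/-- Cylindrification: (c_(J) p)(x) = sup { p(y) : y ≡_J x }. -/
def Fc (J : Set I) (p : (I → X) → unitInterval) (x : I → X) : unitInterval :=
  ⟨sSup ((fun y => ((p y : ℝ))) '' {y | ∀ l ∉ J, y l = x l}),
    ⟨le_trans (p x).2.1 (le_csSup
        ⟨1, fun z hz => by obtain ⟨y, -, rfl⟩ := hz; exact (p y).2.2⟩
        (Set.mem_image_of_mem _ (fun l _ => rfl))),
      csSup_le ⟨_, Set.mem_image_of_mem _ (fun l _ => rfl)⟩
        (fun z hz => by obtain ⟨y, -, rfl⟩ := hz; exact (p y).2.2)⟩⟩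

/-!
Substitutions act on arguments and the MV operations act on values, so they commute on the nose.
For the quantifier axioms: `c_(J) q` is constant on each cylinder `{y | y ≡_J x}`, and the maps
`t ↦ t ⊙ c`, `t ↦ t ⊕ c`, `t ↦ t ⊙ t`, `t ↦ t ⊕ t` are monotone and continuous, hence commute
with suprema. The remaining axioms compare suprema over cylinders, via explicit witnesses:
a point of the `J ∪ J'`-cylinder is reached in a `J'`-step after a `J`-step, and a point of
the `σ⁻¹ J`-cylinder through `x ∘ σ` lifts along `σ` when `σ` is injective on `σ⁻¹ J`.
-/

def agreeOff (J : Set I) (x : I → X) : Set (I → X) := {y | ∀ l ∉ J, y l = x l}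

section Cylindrification

variable {J : Set I} {p q : (I → X) → unitInterval} {x y : I → X}

lemma mem_agreeOff_self (J : Set I) (x : I → X) : x ∈ agreeOff J x := fun _ _ => rfl

lemma agreeOff_eq_of_mem (h : y ∈ agreeOff J x) : agreeOff J y = agreeOff J x :=
  Set.ext fun z => forall_congr' fun l => forall_congr' fun hl => by rw [h l hl]

lemma comp_mem_agreeOff_preimage (σ : I → I) (h : y ∈ agreeOff J x) :
    y ∘ σ ∈ agreeOff (σ ⁻¹' J) (x ∘ σ) :=
  fun l hl => h (σ l) hl

lemma coe_Fc (J : Set I) (p : (I → X) → unitInterval) (x : I → X) :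
    (Fc J p x : ℝ) = sSup ((fun y => (p y : ℝ)) '' agreeOff J x) := rfl

lemma isLUB_Fc (J : Set I) (p : (I → X) → unitInterval) (x : I → X) :
    IsLUB ((fun y => (p y : ℝ)) '' agreeOff J x) (Fc J p x) :=
  isLUB_csSup ⟨_, Set.mem_image_of_mem _ (mem_agreeOff_self J x)⟩
    ⟨1, Set.forall_mem_image.2 fun y _ => (p y).2.2⟩

lemma le_Fc (h : y ∈ agreeOff J x) : (p y : ℝ) ≤ Fc J p x :=
  (isLUB_Fc J p x).1 (Set.mem_image_of_mem _ h)

lemma Fc_le {c : ℝ} (h : ∀ y ∈ agreeOff J x, (p y : ℝ) ≤ c) : (Fc J p x : ℝ) ≤ c :=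
  (isLUB_Fc J p x).2 (Set.forall_mem_image.2 h)

lemma le_Fc_self (J : Set I) (p : (I → X) → unitInterval) : p ≤ Fc J p :=
  fun x => le_Fc (mem_agreeOff_self J x)

lemma Fc_const (J : Set I) (a : unitInterval) : Fc (X := X) J (fun _ => a) = fun _ => a :=
  funext fun x =>
    le_antisymm (Fc_le fun _ _ => le_rfl) (le_Fc (p := fun _ => a) (mem_agreeOff_self J x))

lemma Fc_eq_of_mem (p : (I → X) → unitInterval) (h : y ∈ agreeOff J x) :
    Fc J p y = Fc J p x :=
  Subtype.ext (by rw [coe_Fc, coe_Fc, agreeOff_eq_of_mem h])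

lemma coe_Fc_of_eq_comp (g : ℝ → ℝ) (hg : Monotone g) (hgc : Continuous g)
    (hq : ∀ y ∈ agreeOff J x, (q y : ℝ) = g (p y)) :
    (Fc J q x : ℝ) = g (Fc J p x) := by
  rw [coe_Fc, Set.image_congr hq, ← Set.image_image g, coe_Fc,
    hg.map_csSup_of_continuousAt hgc.continuousAt (isLUB_Fc J p x).nonempty
      (isLUB_Fc J p x).bddAbove]

lemma Fc_Fmul_Fc : Fc J (Fmul p (Fc J q)) = Fmul (Fc J p) (Fc J q) :=
  funext fun x => Subtype.ext <|
    coe_Fc_of_eq_comp (fun t => max (t + Fc J q x - 1) 0)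
      (fun _ _ h => by simp only; gcongr) (by fun_prop)
      (fun _ hy => by simp only [Fmul, umul, Fc_eq_of_mem q hy])

lemma Fc_Fadd_Fc : Fc J (Fadd p (Fc J q)) = Fadd (Fc J p) (Fc J q) :=
  funext fun x => Subtype.ext <|
    coe_Fc_of_eq_comp (fun t => min (t + Fc J q x) 1)
      (fun _ _ h => by simp only; gcongr) (by fun_prop)
      (fun _ hy => by simp only [Fadd, uadd, Fc_eq_of_mem q hy])

lemma Fc_Fmul_self : Fc J (Fmul p p) = Fmul (Fc J p) (Fc J p) :=
  funext fun _ => Subtype.ext <|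
    coe_Fc_of_eq_comp (fun t => max (t + t - 1) 0)
      (fun _ _ h => by simp only; gcongr) (by fun_prop) (fun _ _ => rfl)

lemma Fc_Fadd_self : Fc J (Fadd p p) = Fadd (Fc J p) (Fc J p) :=
  funext fun _ => Subtype.ext <|
    coe_Fc_of_eq_comp (fun t => min (t + t) 1)
      (fun _ _ h => by simp only; gcongr) (by fun_prop) (fun _ _ => rfl)

lemma Fc_union (J J' : Set I) (p : (I → X) → unitInterval) :
    Fc (J ∪ J') p = Fc J (Fc J' p) := by
  classical
  funext x
  refine le_antisymm (Fc_le fun y hy => ?_) (Fc_le fun y hy => Fc_le fun z hz => le_Fc ?_)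
  · let y' : I → X := fun l => if l ∈ J' then x l else y l
    have hy'x : y' ∈ agreeOff J x := fun l hl => by
      by_cases hl' : l ∈ J'
      · simp [y', hl']
      · simpa [y', hl'] using hy l (by simp [hl, hl'])
    have hyy' : y ∈ agreeOff J' y' := fun l hl => by simp [y', hl]
    exact (le_Fc hyy').trans (le_Fc hy'x)
  · intro l hl
    rw [Set.mem_union, not_or] at hl
    rw [hz l hl.2, hy l hl.1]

lemma Fs_Fc_eq_of_eqOn_compl {σ τ : I → I} (h : ∀ k ∉ J, σ k = τ k)
    (p : (I → X) → unitInterval) : Fs σ (Fc J p) = Fs τ (Fc J p) :=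
  funext fun x => Fc_eq_of_mem p fun l hl => congrArg x (h l hl)

lemma exists_comp_eq_of_injOn {σ : I → I} (hσ : Set.InjOn σ (σ ⁻¹' J)) {z : I → X}
    (hz : z ∈ agreeOff (σ ⁻¹' J) (x ∘ σ)) : ∃ y ∈ agreeOff J x, y ∘ σ = z := by
  classical
  let y : I → X := fun l => if h : ∃ k ∈ σ ⁻¹' J, σ k = l then z h.choose else x l
  refine ⟨y, fun l hl => dif_neg fun ⟨k, hk, hkl⟩ => hl (hkl ▸ hk), funext fun k => ?_⟩
  by_cases hk : k ∈ σ ⁻¹' J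
  · have hex : ∃ k' ∈ σ ⁻¹' J, σ k' = σ k := ⟨k, hk, rfl⟩
    simp only [Function.comp_apply, y, dif_pos hex,
      hσ hex.choose_spec.1 hk hex.choose_spec.2]
  · have hex : ¬∃ k' ∈ σ ⁻¹' J, σ k' = σ k := fun ⟨k', hk', hkk'⟩ =>
      hk (by rwa [Set.mem_preimage, ← hkk'])
    simp only [Function.comp_apply, y, dif_neg hex]
    exact (hz k hk).symm

lemma Fc_Fs_of_injOn {σ : I → I} (hσ : Set.InjOn σ (σ ⁻¹' J)) (p : (I → X) → unitInterval) :
    Fc J (Fs σ p) = Fs σ (Fc (σ ⁻¹' J) p) := by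
  funext x
  refine le_antisymm (Fc_le fun y hy => le_Fc (comp_mem_agreeOff_preimage σ hy))
    (Fc_le fun z hz => ?_)
  obtain ⟨y, hy, rfl⟩ := exists_comp_eq_of_injOn hσ hz
  exact le_Fc (p := Fs σ p) hy

end Cylindrification

/-- The algebra of all [0,1]-valued functions on ^I X, with pointwise MV operations,
substitutions s_τ for all τ ∈ ^I I and cylindrifications c_(J) for all J ⊆ I,
satisfies all the axioms of a polyadic MV algebra (G = ^I I, T = ℘(I)). -/
theorem functional_polyadic_MV :
    (∀ (τ : I → I) (p q : (I → X) → unitInterval),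
        Fs τ (Fadd p q) = Fadd (Fs τ p) (Fs τ q)) ∧
    (∀ (τ : I → I) (p q : (I → X) → unitInterval),
        Fs τ (Fmul p q) = Fmul (Fs τ p) (Fs τ q)) ∧
    (∀ (τ : I → I) (p : (I → X) → unitInterval),
        Fs τ (Fneg p) = Fneg (Fs τ p)) ∧
    (∀ J : Set I, Fc (X := X) J (fun _ => 0) = fun _ => 0) ∧
    (∀ (J : Set I) (p : (I → X) → unitInterval), p ≤ Fc J p) ∧
    (∀ (J : Set I) (p q : (I → X) → unitInterval),
        Fc J (Fmul p (Fc J q)) = Fmul (Fc J p) (Fc J q)) ∧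
    (∀ (J : Set I) (p q : (I → X) → unitInterval),
        Fc J (Fadd p (Fc J q)) = Fadd (Fc J p) (Fc J q)) ∧
    (∀ (J : Set I) (p : (I → X) → unitInterval),
        Fc J (Fmul p p) = Fmul (Fc J p) (Fc J p)) ∧
    (∀ (J : Set I) (p : (I → X) → unitInterval),
        Fc J (Fadd p p) = Fadd (Fc J p) (Fc J p)) ∧
    (∀ p : (I → X) → unitInterval, Fs id p = p) ∧
    (∀ (σ τ : I → I) (p : (I → X) → unitInterval),
        Fs (σ ∘ τ) p = Fs σ (Fs τ p)) ∧
    (∀ (J J' : Set I) (p : (I → X) → unitInterval),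
        Fc (J ∪ J') p = Fc J (Fc J' p)) ∧
    (∀ (σ τ : I → I) (J : Set I), (∀ k ∉ J, σ k = τ k) →
        ∀ p : (I → X) → unitInterval, Fs σ (Fc J p) = Fs τ (Fc J p)) ∧
    (∀ (σ : I → I) (J : Set I), Set.InjOn σ (σ ⁻¹' J) →
        ∀ p : (I → X) → unitInterval, Fc J (Fs σ p) = Fs σ (Fc (σ ⁻¹' J) p)) :=
  ⟨fun _ _ _ => rfl, fun _ _ _ => rfl, fun _ _ => rfl, fun J => Fc_const J 0, le_Fc_self,
    fun _ _ _ => Fc_Fmul_Fc, fun _ _ _ => Fc_Fadd_Fc, fun _ _ => Fc_Fmul_self,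
    fun _ _ => Fc_Fadd_self, fun _ => rfl, fun _ _ _ => rfl, Fc_union,
    fun _ _ _ h => Fs_Fc_eq_of_eqOn_compl h, fun _ _ hσ => Fc_Fs_of_injOn hσ⟩
end
end

section
/- The subsemigroup of (^ωω, ∘) generated by all replacements [i|j], all transpositions [i,j], the successor function suc, and the function pred (with pred(0)=0, pred(n+1)=n) is a rich semigroup: it is closed under τ ↦ τ[i|j], contains σ = suc and π = pred with π ∘ σ = Id and Rg σ ≠ ω, and is closed under τ ↦ (σ ∘ τ ∘ π)[(ω ∖ Rg σ)|Id]. -/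
/-- The successor function on ω. -/
def suc : Function.End ℕ := fun n => n + 1

/-- The predecessor function on ω (pred 0 = 0). -/
def pred : Function.End ℕ := fun n => n - 1

/-- The replacement [i|j]. -/
def repl (i j : ℕ) : Function.End ℕ := fun k => if k = i then j else k

/-- The generating set: all replacements, all transpositions, suc and pred. -/
def genset : Set (Function.End ℕ) :=
  {f | (∃ i j, f = repl i j) ∨ (∃ i j, f = ⇑(Equiv.swap i j)) ∨ f = suc ∨ f = pred}

/-- The subsemigroup of (^ωω, ∘) generated by replacements, transpositions,
suc and pred. -/
def richSg : Subsemigroup (Function.End ℕ) := Subsemigroup.closure genset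

/-!
Conjugating by `suc` gives the shift `shift τ = (0 ↦ 0, k + 1 ↦ τ k + 1)`, which is multiplicative
and sends each generator into `richSg` (e.g. `shift suc = [1|0] ∘ suc`,
`shift pred = pred ∘ [1|2]`), so `richSg` is closed under it. The shift frees the value `0` as a
marker, which makes replacements expressible:
`τ[i|j] = pred ∘ [0|j+1] ∘ shift τ ∘ [i+1|0] ∘ suc`.
-/

lemma repl_mem_richSg (i j : ℕ) : repl i j ∈ richSg :=
  Subsemigroup.subset_closure (Or.inl ⟨i, j, rfl⟩)

lemma swap_mem_richSg (i j : ℕ) : (⇑(Equiv.swap i j) : Function.End ℕ) ∈ richSg :=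
  Subsemigroup.subset_closure (Or.inr (Or.inl ⟨i, j, rfl⟩))

lemma suc_mem_richSg : suc ∈ richSg :=
  Subsemigroup.subset_closure (Or.inr (Or.inr (Or.inl rfl)))

lemma pred_mem_richSg : pred ∈ richSg :=
  Subsemigroup.subset_closure (Or.inr (Or.inr (Or.inr rfl)))

def shift (τ : Function.End ℕ) : Function.End ℕ
  | 0 => 0
  | k + 1 => τ k + 1

def shiftHom : Function.End ℕ →ₙ* Function.End ℕ where
  toFun := shift
  map_mul' τ ρ := by
    funext k
    cases k <;> rfl

lemma shift_repl (i j : ℕ) : shift (repl i j) = repl (i + 1) (j + 1) := by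
  funext k
  cases k <;> simp [shift, repl, apply_ite (· + 1)]

lemma shift_swap (i j : ℕ) :
    shift (⇑(Equiv.swap i j) : Function.End ℕ) = ⇑(Equiv.swap (i + 1) (j + 1)) := by
  funext k
  cases k with
  | zero => simp [shift, Equiv.swap_apply_of_ne_of_ne]
  | succ k => exact ((add_left_injective 1).swap_apply i j k).symm

lemma shift_suc : shift suc = repl 1 0 * suc := by
  funext k
  show shift suc k = repl 1 0 (k + 1)
  cases k <;> simp [shift, repl, suc]

lemma shift_pred : shift pred = pred * repl 1 2 := by
  funext k
  show shift pred k = repl 1 2 k - 1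
  rcases k with _ | _ | k <;> simp [shift, repl, pred]

lemma update_eq_pred_mul_shift (τ : Function.End ℕ) (i j : ℕ) :
    (Function.update τ i j : Function.End ℕ) =
      pred * repl 0 (j + 1) * shift τ * repl (i + 1) 0 * suc := by
  funext k
  show Function.update τ i j k = pred (repl 0 (j + 1) (shift τ (repl (i + 1) 0 (suc k))))
  rcases eq_or_ne k i with rfl | h
  · simp [Function.update, shift, repl, suc, pred]
  · simp [Function.update, shift, repl, suc, pred, h]

lemma shift_mem_richSg {τ : Function.End ℕ} (hτ : τ ∈ richSg) : shift τ ∈ richSg := by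
  suffices h : richSg ≤ richSg.comap shiftHom from h hτ
  refine Subsemigroup.closure_le.mpr ?_
  rintro f (⟨i, j, rfl⟩ | ⟨i, j, rfl⟩ | rfl | rfl) <;> show shift _ ∈ richSg
  · exact shift_repl i j ▸ repl_mem_richSg _ _
  · exact shift_swap i j ▸ swap_mem_richSg _ _
  · exact shift_suc ▸ mul_mem (repl_mem_richSg 1 0) suc_mem_richSg
  · exact shift_pred ▸ mul_mem pred_mem_richSg (repl_mem_richSg 1 2)

lemma update_mem_richSg {τ : Function.End ℕ} (hτ : τ ∈ richSg) (i j : ℕ) :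
    (Function.update τ i j : Function.End ℕ) ∈ richSg := by
  rw [update_eq_pred_mul_shift]
  exact mul_mem (mul_mem (mul_mem (mul_mem pred_mem_richSg (repl_mem_richSg _ _))
    (shift_mem_richSg hτ)) (repl_mem_richSg _ _)) suc_mem_richSg

lemma zero_notMem_range_suc : 0 ∉ Set.range suc := by
  rintro ⟨n, hn⟩
  exact n.succ_ne_zero hn

/-- This semigroup is rich: closed under τ ↦ τ[i|j]; contains σ = suc, π = pred
with π ∘ σ = Id and Rg σ ≠ ω; and closed under τ ↦ (σ ∘ τ ∘ π)[(ω ∖ Rg σ)|Id].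
(Here ω ∖ Rg suc = {0}.) -/
theorem richSg_is_rich :
    (∀ τ ∈ richSg, ∀ i j : ℕ, (Function.update τ i j : Function.End ℕ) ∈ richSg) ∧
    (suc ∈ richSg ∧ pred ∈ richSg ∧ (pred ∘ suc : ℕ → ℕ) = id ∧
      Set.range (suc : ℕ → ℕ) ≠ Set.univ) ∧
    (∀ τ ∈ richSg,
      ((fun k => if k = 0 then k else (suc ∘ τ ∘ pred) k) : Function.End ℕ) ∈ richSg) := by
  refine ⟨fun τ hτ => update_mem_richSg hτ, ⟨suc_mem_richSg, pred_mem_richSg, rfl, ?_⟩, ?_⟩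
  · exact fun h => zero_notMem_range_suc (h ▸ Set.mem_univ 0)
  · intro τ hτ
    have h_eq :
        ((fun k => if k = 0 then k else (suc ∘ τ ∘ pred) k) : Function.End ℕ) = shift τ := by
      funext k
      cases k <;> rfl
    exact h_eq ▸ shift_mem_richSg hτ
end

section
/- Let B = (A, {r̄ : r ∈ L}) be a Pavelka algebra and P a proper filter of the MV reduct A. Then for r, s ∈ L: r̄ ∈ P if and only if r = 1; and r̄/P ≤ s̄/P in the quotient A/P if and only if r ≤ s. -/
/-- A filter of an MV algebra: contains 1, closed under ⊙ and upward closed. -/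
def IsMVFilter {A : Type*} (M : MVAlg A) (F : Set A) : Prop :=
  M.one ∈ F ∧ (∀ a ∈ F, ∀ b ∈ F, M.mul a b ∈ F) ∧ (∀ a ∈ F, ∀ b, M.le a b → b ∈ F)

/-- The rational unit interval L = [0,1] ∩ ℚ. -/
def QI : Type := {q : ℚ // 0 ≤ q ∧ q ≤ 1}

/-- Łukasiewicz (truncated) sum on L. -/
def qadd (r s : QI) : QI :=
  ⟨min (r.1 + s.1) 1, ⟨le_min (add_nonneg r.2.1 s.2.1) zero_le_one, min_le_right _ _⟩⟩

/-- Łukasiewicz negation on L. -/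
def qneg (r : QI) : QI := ⟨1 - r.1, ⟨by linarith [r.2.2], by linarith [r.2.1]⟩⟩

/-- A Pavelka algebra: an MV algebra with truth constants r̄ for r ∈ L such that
0̄ = 0, r̄ ⊕ s̄ = (r ⊕ s)‾ and ¬r̄ = (¬r)‾. -/
structure Pavelka {A : Type*} (M : MVAlg A) where
  bar : QI → A
  bar_zero : bar ⟨0, ⟨le_refl 0, zero_le_one⟩⟩ = M.zero
  bar_add : ∀ r s, bar (qadd r s) = M.add (bar r) (bar s)
  bar_neg : ∀ r, bar (qneg r) = M.neg (bar r)

namespace MVAlg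

variable {A : Type*} (M : MVAlg A)

def npow (a : A) : ℕ → A
  | 0 => M.one
  | n + 1 => M.mul a (npow a n)

end MVAlg

theorem IsMVFilter.npow_mem {A : Type*} {M : MVAlg A} {F : Set A} (hF : IsMVFilter M F)
    {a : A} (ha : a ∈ F) (n : ℕ) : M.npow a n ∈ F := by
  induction n with
  | zero => exact hF.1
  | succ n ih => exact hF.2.1 _ ha _ ih

namespace QI

def zero : QI := ⟨0, le_refl 0, zero_le_one⟩

def one : QI := ⟨1, zero_le_one, le_refl 1⟩

def mul (r s : QI) : QI := qneg (qadd (qneg r) (qneg s))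

theorem mul_val (r s : QI) : (mul r s).1 = max (r.1 + s.1 - 1) 0 := by
  change 1 - min ((1 - r.1) + (1 - s.1)) 1 = max (r.1 + s.1 - 1) 0
  rcases le_total ((1 - r.1) + (1 - s.1)) 1 with h | h
  · rw [min_eq_left h, max_eq_left (by linarith)]; ring
  · rw [min_eq_right h, max_eq_right (by linarith)]; ring

def npow (r : QI) : ℕ → QI
  | 0 => one
  | n + 1 => mul r (npow r n)

theorem npow_val (r : QI) (n : ℕ) : (npow r n).1 = max (1 - n * (1 - r.1)) 0 := by
  induction n with
  | zero => simp [npow, one]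
  | succ n ih =>
    rw [npow, mul_val, ih]
    have hr : r.1 ≤ 1 := r.2.2
    rcases le_total 0 (1 - (n : ℚ) * (1 - r.1)) with h | h
    · rw [max_eq_left h]
      push_cast
      rcases le_total 0 (1 - ((n : ℚ) + 1) * (1 - r.1)) with h' | h'
      · rw [max_eq_left (by linarith), max_eq_left h']; ring
      · rw [max_eq_right (by linarith), max_eq_right h']
    · rw [max_eq_right h, max_eq_right (by linarith), max_eq_right (by push_cast; nlinarith)]

theorem exists_npow_eq_zero {r : QI} (hr : r.1 < 1) : ∃ n, npow r n = zero := by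
  have hpos : 0 < 1 - r.1 := by linarith
  obtain ⟨n, hn⟩ := exists_nat_ge (1 - r.1)⁻¹
  refine ⟨n, Subtype.ext ?_⟩
  have h : 1 ≤ (n : ℚ) * (1 - r.1) := by rwa [inv_le_iff_one_le_mul₀ hpos] at hn
  rw [npow_val, max_eq_right (by linarith)]
  rfl

theorem qadd_qneg_val_eq_one_iff (r s : QI) : (qadd (qneg r) s).1 = 1 ↔ r.1 ≤ s.1 := by
  change min ((1 - r.1) + s.1) 1 = 1 ↔ r.1 ≤ s.1
  rw [min_eq_iff]
  constructor
  · rintro (⟨h, -⟩ | ⟨-, h⟩) <;> linarith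
  · intro h
    exact Or.inr ⟨rfl, by linarith⟩

end QI

namespace Pavelka

variable {A : Type*} {M : MVAlg A} (Pav : Pavelka M)

theorem bar_one : Pav.bar QI.one = M.one := by
  have h : QI.one = qneg QI.zero := Subtype.ext (by simp [QI.one, QI.zero, qneg])
  rw [h, Pav.bar_neg, QI.zero, Pav.bar_zero, M.neg_zero]

theorem bar_mul (r s : QI) : Pav.bar (QI.mul r s) = M.mul (Pav.bar r) (Pav.bar s) := by
  rw [QI.mul, Pav.bar_neg, Pav.bar_add, Pav.bar_neg, Pav.bar_neg, M.neg_add, M.neg_neg,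
    M.neg_neg]

theorem bar_npow (r : QI) (n : ℕ) : Pav.bar (QI.npow r n) = M.npow (Pav.bar r) n := by
  induction n with
  | zero => exact Pav.bar_one
  | succ n ih => rw [QI.npow, bar_mul, ih, MVAlg.npow]

theorem neg_bar_add_bar (r s : QI) :
    M.add (M.neg (Pav.bar r)) (Pav.bar s) = Pav.bar (qadd (qneg r) s) := by
  rw [Pav.bar_add, Pav.bar_neg]

theorem bar_mem_iff {P : Set A} (hP : IsMVFilter M P) (hproper : M.zero ∉ P) (r : QI) :
    Pav.bar r ∈ P ↔ r.1 = 1 := by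
  constructor
  · intro hr
    by_contra hne
    obtain ⟨n, hn⟩ := QI.exists_npow_eq_zero (lt_of_le_of_ne r.2.2 hne)
    have h := hP.npow_mem hr n
    rw [← bar_npow, hn] at h
    exact hproper (Pav.bar_zero ▸ h)
  · intro hr
    rw [show r = QI.one from Subtype.ext hr, bar_one]
    exact hP.1

end Pavelka

/-- For a proper filter P of a Pavelka algebra: r̄ ∈ P iff r = 1, and
r̄/P ≤ s̄/P (i.e. r̄ → s̄ ∈ P, which defines the order of the quotient A/P)
iff r ≤ s. -/
theorem pavelka_filter_constants {A : Type*} (M : MVAlg A) (Pav : Pavelka M)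
    (P : Set A) (hP : IsMVFilter M P) (hproper : M.zero ∉ P) :
    (∀ r : QI, Pav.bar r ∈ P ↔ r.1 = 1) ∧
    (∀ r s : QI, M.add (M.neg (Pav.bar r)) (Pav.bar s) ∈ P ↔ r.1 ≤ s.1) :=
  ⟨Pav.bar_mem_iff hP hproper, fun r s => by
    rw [Pav.neg_bar_add_bar, Pav.bar_mem_iff hP hproper, QI.qadd_qneg_val_eq_one_iff]⟩
end

section
/- Let A be a Pavelka algebra with proper maximal filter P, and define [a]_P = sup { r ∈ L : r̄ → a ∈ P }. Then [a]_P = inf { r ∈ L : a → r̄ ∈ P }, and the map a ↦ [a]_P satisfies [a ⊕ b]_P = [a]_P ⊕ [b]_P, [a ⊙ b]_P = [a]_P ⊙ [b]_P, and [¬a]_P = ¬[a]_P, where values are computed in the standard MV algebra [0,1]. -/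
section MVLemmas
variable {A : Type*} (M : MVAlg A)

def msup (a b : A) : A := M.add (M.neg (M.add (M.neg a) b)) b

variable {M}

lemma mv_zero_add (a : A) : M.add M.zero a = a := by rw [M.add_comm]; exact M.add_zero a
lemma mv_one_add (a : A) : M.add M.one a = M.one := by rw [M.add_comm]; exact M.add_one a
lemma mv_neg_one : M.neg M.one = M.zero := by rw [← M.neg_zero, M.neg_neg]
lemma mv_one_mul (a : A) : M.mul M.one a = a := by rw [M.mul_comm]; exact M.mul_one a
lemma mv_neg_inj {a b : A} (h : M.neg a = M.neg b) : a = b := by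
  rw [← M.neg_neg a, h, M.neg_neg]

lemma mv_le_refl (a : A) : M.le a a := by
  show M.add (M.neg a) a = M.one
  rw [M.add_comm]; exact M.add_neg a

lemma mv_le_top (a : A) : M.le a M.one := M.add_one _

lemma mv_bot_le (a : A) : M.le M.zero a := by
  show M.add (M.neg M.zero) a = M.one
  rw [M.neg_zero]; exact mv_one_add a

lemma mv_eq_zero_of_le_zero {a : A} (h : M.le a M.zero) : a = M.zero := by
  have h' : M.neg a = M.one := by
    have := h; rwa [MVAlg.le, M.add_zero] at this
  rw [← M.neg_neg a, h', mv_neg_one]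

lemma mv_resid {a b c : A} : M.le (M.mul a b) c ↔ M.le a (M.add (M.neg b) c) := by
  show M.add (M.neg (M.mul a b)) c = M.one ↔ M.add (M.neg a) (M.add (M.neg b) c) = M.one
  rw [M.neg_mul, ← M.add_assoc]

lemma mv_decomp {a b : A} (h : M.le a b) :
    M.add (M.neg (M.add (M.neg b) a)) a = b := by
  have hc := M.chang a b
  rw [h, mv_neg_one, mv_zero_add] at hc
  exact hc.symm

lemma mv_le_add_self (a b : A) : M.le a (M.add b a) := by
  show M.add (M.neg a) (M.add b a) = M.one
  rw [M.add_comm b a, M.add_assoc, M.add_comm (M.neg a) a, M.add_neg, mv_one_add]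

lemma mv_le_trans {a b c : A} (h1 : M.le a b) (h2 : M.le b c) : M.le a c := by
  show M.add (M.neg a) c = M.one
  rw [← mv_decomp h2, M.add_comm (M.neg (M.add (M.neg c) b)) b, M.add_assoc, h1]
  exact mv_one_add _

lemma mv_le_antisymm {a b : A} (h1 : M.le a b) (h2 : M.le b a) : a = b := by
  have := mv_decomp h1
  rw [h2, mv_neg_one, mv_zero_add] at this
  exact this

lemma mv_neg_le {a b : A} (h : M.le a b) : M.le (M.neg b) (M.neg a) := by
  show M.add (M.neg (M.neg b)) (M.neg a) = M.one
  rw [M.neg_neg, M.add_comm]; exact h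

lemma mv_add_le_add_left {a b : A} (h : M.le a b) (c : A) :
    M.le (M.add c a) (M.add c b) := by
  rw [← mv_decomp h, M.add_assoc, M.add_comm c (M.neg (M.add (M.neg b) a)),
    ← M.add_assoc]
  exact mv_le_add_self _ _

lemma mv_add_le_add_right {a b : A} (h : M.le a b) (c : A) :
    M.le (M.add a c) (M.add b c) := by
  rw [M.add_comm a c, M.add_comm b c]; exact mv_add_le_add_left h c

lemma mv_mul_le_mul_left {a b : A} (h : M.le a b) (c : A) :
    M.le (M.mul c a) (M.mul c b) := by
  have h2 := mv_neg_le (mv_add_le_add_left (mv_neg_le h) (M.neg c))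
  rw [M.neg_add, M.neg_add, M.neg_neg, M.neg_neg, M.neg_neg] at h2
  exact h2

lemma mv_mul_le_mul_right {a b : A} (h : M.le a b) (c : A) :
    M.le (M.mul a c) (M.mul b c) := by
  rw [M.mul_comm a c, M.mul_comm b c]; exact mv_mul_le_mul_left h c

lemma mv_mul_le_left (a b : A) : M.le (M.mul a b) a := by
  have := mv_mul_le_mul_left (M := M) (mv_le_top b) a
  rwa [M.mul_one] at this

lemma mv_mul_le_right (a b : A) : M.le (M.mul a b) b := by
  rw [M.mul_comm]; exact mv_mul_le_left b a

lemma mv_inf_le_left (a b : A) : M.le (M.inf a b) a := mv_mul_le_left _ _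

lemma mv_inf_le_right (a b : A) : M.le (M.inf a b) b := by
  show M.le (M.mul a (M.add (M.neg a) b)) b
  rw [M.mul_comm]
  exact mv_resid.mpr (mv_le_refl _)

end MVLemmas

section MVLattice
variable {A : Type*} {M : MVAlg A}

lemma mv_sup_comm (a b : A) : msup M a b = msup M b a := M.chang a b

lemma mv_le_sup_right (a b : A) : M.le b (msup M a b) := mv_le_add_self _ _

lemma mv_le_sup_left (a b : A) : M.le a (msup M a b) := by
  rw [mv_sup_comm]; exact mv_le_add_self _ _

lemma mv_sup_eq_of_le {a b : A} (h : M.le a b) : msup M a b = b := by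
  show M.add (M.neg (M.add (M.neg a) b)) b = b
  rw [h, mv_neg_one, mv_zero_add]

lemma mv_sup_le {a b c : A} (h1 : M.le a c) (h2 : M.le b c) :
    M.le (msup M a b) c := by
  have mono : M.le (msup M a b) (msup M c b) := by
    show M.le (M.add (M.neg (M.add (M.neg a) b)) b) (M.add (M.neg (M.add (M.neg c) b)) b)
    exact mv_add_le_add_right (mv_neg_le (mv_add_le_add_right (mv_neg_le h1) b)) b
  have : msup M c b = c := by rw [mv_sup_comm]; exact mv_sup_eq_of_le h2
  rw [this] at mono; exact mono

lemma mv_neg_sup (a b : A) : M.neg (msup M a b) = M.inf (M.neg b) (M.neg a) := by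
  show M.neg (M.add (M.neg (M.add (M.neg a) b)) b)
      = M.mul (M.neg b) (M.add (M.neg (M.neg b)) (M.neg a))
  rw [M.neg_add, M.neg_neg, M.neg_neg, M.mul_comm, M.add_comm (M.neg a) b]

lemma mv_neg_inf (a b : A) : M.neg (M.inf a b) = msup M (M.neg b) (M.neg a) := by
  show M.neg (M.mul a (M.add (M.neg a) b))
      = M.add (M.neg (M.add (M.neg (M.neg b)) (M.neg a))) (M.neg a)
  rw [M.neg_mul, M.neg_neg, M.add_comm b (M.neg a), M.add_comm (M.neg a) (M.neg (M.add (M.neg a) b))]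

lemma mv_inf_comm (a b : A) : M.inf a b = M.inf b a := by
  apply mv_neg_inj (M := M)
  rw [mv_neg_inf, mv_neg_inf, mv_sup_comm]

lemma mv_le_inf {a b c : A} (h1 : M.le c a) (h2 : M.le c b) : M.le c (M.inf a b) := by
  have hs : M.le (msup M (M.neg b) (M.neg a)) (M.neg c) :=
    mv_sup_le (mv_neg_le h2) (mv_neg_le h1)
  have := mv_neg_le hs
  rw [M.neg_neg, ← mv_neg_inf] at this
  rwa [M.neg_neg] at this

lemma mv_mul_sup (x y z : A) :
    M.mul x (msup M y z) = msup M (M.mul x y) (M.mul x z) := by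
  apply mv_le_antisymm
  · have h1 : M.le y (M.add (M.neg x) (msup M (M.mul x y) (M.mul x z))) := by
      rw [← mv_resid]
      rw [M.mul_comm y x]
      exact mv_le_sup_left _ _
    have h2 : M.le z (M.add (M.neg x) (msup M (M.mul x y) (M.mul x z))) := by
      rw [← mv_resid, M.mul_comm z x]
      exact mv_le_sup_right _ _
    have h3 := mv_sup_le h1 h2
    rw [← mv_resid] at h3
    rwa [M.mul_comm] at h3
  · exact mv_sup_le (mv_mul_le_mul_left (mv_le_sup_left _ _) x)
      (mv_mul_le_mul_left (mv_le_sup_right _ _) x)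

lemma mv_sup_zero_left (a : A) : msup M M.zero a = a := mv_sup_eq_of_le (mv_bot_le a)

lemma mv_mul_add_neg (x y : A) : M.add (M.mul x y) (M.neg x) = msup M y (M.neg x) := by
  show _ = M.add (M.neg (M.add (M.neg y) (M.neg x))) (M.neg x)
  rw [M.neg_add, M.neg_neg, M.neg_neg, M.mul_comm y x]

lemma mv_inf_sup_distrib (x y z : A) :
    M.inf x (msup M y z) = msup M (M.inf x y) (M.inf x z) := by
  apply mv_le_antisymm
  · have key : M.inf x (msup M y z)
        = msup M (M.mul (M.add (M.neg (msup M y z)) x) y) (M.mul (M.add (M.neg (msup M y z)) x) z) := by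
      rw [mv_inf_comm]
      show M.mul (msup M y z) (M.add (M.neg (msup M y z)) x) = _
      rw [M.mul_comm, mv_mul_sup]
    rw [key]
    apply mv_sup_le
    · have : M.le (M.mul (M.add (M.neg (msup M y z)) x) y) (M.inf x y) := by
        rw [mv_inf_comm]
        show M.le _ (M.mul y (M.add (M.neg y) x))
        rw [M.mul_comm _ y]
        exact mv_mul_le_mul_left (mv_add_le_add_right (mv_neg_le (mv_le_sup_left _ _)) x) y
      exact mv_le_trans this (mv_le_sup_left _ _)
    · have : M.le (M.mul (M.add (M.neg (msup M y z)) x) z) (M.inf x z) := by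
        rw [mv_inf_comm]
        show M.le _ (M.mul z (M.add (M.neg z) x))
        rw [M.mul_comm _ z]
        exact mv_mul_le_mul_left (mv_add_le_add_right (mv_neg_le (mv_le_sup_right _ _)) x) z
      exact mv_le_trans this (mv_le_sup_right _ _)
  · apply mv_sup_le
    · exact mv_le_inf (mv_inf_le_left _ _)
        (mv_le_trans (mv_inf_le_right _ _) (mv_le_sup_left _ _))
    · exact mv_le_inf (mv_inf_le_left _ _)
        (mv_le_trans (mv_inf_le_right _ _) (mv_le_sup_right _ _))

lemma mv_sup_inf_distrib (x y z : A) :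
    msup M x (M.inf y z) = M.inf (msup M x y) (msup M x z) := by
  apply mv_neg_inj (M := M)
  rw [mv_neg_sup x (M.inf y z), mv_neg_inf (msup M x y) (msup M x z),
    mv_neg_inf y z, mv_neg_sup x y, mv_neg_sup x z,
    mv_inf_comm (msup M (M.neg z) (M.neg y)) (M.neg x),
    mv_inf_sup_distrib (M.neg x) (M.neg z) (M.neg y),
    mv_inf_comm (M.neg x) (M.neg z), mv_inf_comm (M.neg x) (M.neg y)]

lemma mv_mul_inf (x y z : A) :
    M.mul x (M.inf y z) = M.inf (M.mul x y) (M.mul x z) := by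
  apply mv_le_antisymm
  · exact mv_le_inf (mv_mul_le_mul_left (mv_inf_le_left _ _) x)
      (mv_mul_le_mul_left (mv_inf_le_right _ _) x)
  · set c := M.inf (M.mul x y) (M.mul x z) with hc
    have hcx : M.le c x := mv_le_trans (mv_inf_le_left _ _) (mv_mul_le_left _ _)
    have h1 : M.le (M.add (M.neg x) c) (msup M y (M.neg x)) := by
      rw [← mv_mul_add_neg, M.add_comm (M.mul x y) (M.neg x)]
      exact mv_add_le_add_left (mv_inf_le_left _ _) _
    have h2 : M.le (M.add (M.neg x) c) (msup M z (M.neg x)) := by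
      rw [← mv_mul_add_neg, M.add_comm (M.mul x z) (M.neg x)]
      exact mv_add_le_add_left (mv_inf_le_right _ _) _
    have h3 : M.le (M.add (M.neg x) c) (msup M (M.neg x) (M.inf y z)) := by
      have := mv_le_inf h1 h2
      rw [mv_sup_comm y _, mv_sup_comm z _, ← mv_sup_inf_distrib] at this
      exact this
    have hceq : c = M.mul x (M.add (M.neg x) c) := by
      have : M.inf x c = c :=
        mv_le_antisymm (mv_inf_le_right _ _) (mv_le_inf hcx (mv_le_refl _))
      exact this.symm
    rw [hceq]
    have := mv_mul_le_mul_left h3 x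
    rw [mv_mul_sup, M.mul_neg, mv_sup_zero_left] at this
    exact this

lemma mv_absorb (x y : A) :
    M.mul (msup M x y) (M.neg y) = M.mul x (M.neg y) := by
  have hx : M.mul x (M.neg y) = M.neg (M.add (M.neg x) y) := by
    rw [M.neg_add, M.neg_neg]
  have e1 : M.mul (msup M x y) (M.neg y) = M.inf (M.neg y) (M.mul x (M.neg y)) := by
    show M.mul (M.add (M.neg (M.add (M.neg x) y)) y) (M.neg y)
        = M.mul (M.neg y) (M.add (M.neg (M.neg y)) (M.mul x (M.neg y)))
    rw [M.neg_neg, hx, M.mul_comm, M.add_comm y (M.neg (M.add (M.neg x) y))]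
  rw [e1]
  exact mv_le_antisymm (mv_inf_le_right _ _)
    (mv_le_inf (mv_mul_le_right _ _) (mv_le_refl _))

lemma mv_crux (x y : A) :
    M.inf (M.mul x (M.neg y)) (M.mul y (M.neg x)) = M.zero := by
  rw [← mv_absorb x y, ← mv_absorb y x, mv_sup_comm y x, ← mv_mul_inf]
  have : M.inf (M.neg y) (M.neg x) = M.neg (msup M x y) := by
    rw [mv_neg_sup]
  rw [this, M.mul_neg]

end MVLattice

section MVPow
variable {A : Type*}

def apow (M : MVAlg A) (a : A) : ℕ → A
  | 0 => M.zero
  | n + 1 => M.add a (apow M a n)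

def mpow (M : MVAlg A) (a : A) : ℕ → A
  | 0 => M.one
  | n + 1 => M.mul a (mpow M a n)

variable {M : MVAlg A}

lemma mv_neg_mpow (a : A) : ∀ n, M.neg (mpow M a n) = apow M (M.neg a) n
  | 0 => by show M.neg M.one = M.zero; exact mv_neg_one
  | n + 1 => by
      show M.neg (M.mul a (mpow M a n)) = M.add (M.neg a) (apow M (M.neg a) n)
      rw [M.neg_mul, mv_neg_mpow a n]

lemma mv_inf_zero (a : A) : M.inf a M.zero = M.zero := by
  show M.mul a (M.add (M.neg a) M.zero) = M.zero
  rw [M.add_zero, M.mul_neg]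

lemma mv_inf_eq_zero_iff {a b : A} :
    M.inf a b = M.zero ↔ M.le (M.add (M.neg a) b) (M.neg a) := by
  constructor
  · intro h
    have : M.le (M.mul (M.add (M.neg a) b) a) M.zero := by
      rw [M.mul_comm]
      show M.le (M.inf a b) M.zero
      rw [h]; exact mv_le_refl _
    rw [mv_resid] at this
    rwa [M.add_zero] at this
  · intro h
    apply mv_eq_zero_of_le_zero
    show M.le (M.mul a (M.add (M.neg a) b)) M.zero
    rw [M.mul_comm, mv_resid, M.add_zero]
    exact h

lemma mv_inf_add_zero {a b c : A} (hb : M.inf a b = M.zero) (hc : M.inf a c = M.zero) :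
    M.inf a (M.add b c) = M.zero := by
  rw [mv_inf_eq_zero_iff] at hb hc ⊢
  have h1 : M.le (M.add (M.add (M.neg a) b) c) (M.add (M.neg a) c) :=
    mv_add_le_add_right hb c
  rw [M.add_assoc]
  exact mv_le_trans h1 hc

lemma mv_inf_apow {a b : A} (h : M.inf a b = M.zero) :
    ∀ n, M.inf a (apow M b n) = M.zero
  | 0 => mv_inf_zero a
  | n + 1 => by
      show M.inf a (M.add b (apow M b n)) = M.zero
      exact mv_inf_add_zero h (mv_inf_apow h n)

lemma mv_inf_apow₂ {a b : A} (h : M.inf a b = M.zero) (n m : ℕ) :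
    M.inf (apow M a n) (apow M b m) = M.zero := by
  have h1 : M.inf (apow M b m) a = M.zero := by
    rw [mv_inf_comm]; exact mv_inf_apow h m
  rw [mv_inf_comm]
  exact mv_inf_apow h1 n

lemma mv_mul_le_inf (a b : A) : M.le (M.mul a b) (M.inf a b) :=
  mv_le_inf (mv_mul_le_left _ _) (mv_mul_le_right _ _)

lemma mv_mpow_add (a : A) (n m : ℕ) :
    mpow M a (n + m) = M.mul (mpow M a n) (mpow M a m) := by
  induction n with
  | zero =>
      rw [Nat.zero_add]
      show mpow M a m = M.mul M.one (mpow M a m)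
      rw [mv_one_mul]
  | succ k ih =>
      rw [Nat.add_right_comm k 1 m]
      show M.mul a (mpow M a (k + m)) = M.mul (M.mul a (mpow M a k)) (mpow M a m)
      rw [ih, M.mul_assoc]

/-- Syllogism: (x→y)⊙(y→z) ≤ x→z. -/
lemma mv_syl (x y z : A) :
    M.le (M.mul (M.add (M.neg x) y) (M.add (M.neg y) z)) (M.add (M.neg x) z) := by
  set Y := M.add (M.neg x) y with hY
  set Z := M.add (M.neg y) z with hZ
  rw [← mv_resid]
  have e : M.mul (M.mul Y Z) x = M.mul Z (M.mul Y x) := by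
    rw [M.mul_comm Y Z, ← M.mul_assoc]
  rw [e]
  have h1 : M.le (M.mul Y x) y := by
    rw [M.mul_comm]
    show M.le (M.inf x y) y
    exact mv_inf_le_right _ _
  have h2 : M.le (M.mul Z (M.mul Y x)) (M.mul Z y) := mv_mul_le_mul_left h1 Z
  have h3 : M.le (M.mul Z y) z := by
    rw [M.mul_comm]
    show M.le (M.inf y z) z
    exact mv_inf_le_right _ _
  exact mv_le_trans h2 h3

/-- Exchange: u⊙(x⊕y) ≤ (u⊙x)⊕y. -/
lemma mv_exchange (u x y : A) :
    M.le (M.mul u (M.add x y)) (M.add (M.mul u x) y) := by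
  have e : M.add (M.mul u x) y = M.add (M.neg (M.neg y)) (M.mul u x) := by
    rw [M.neg_neg, M.add_comm]
  rw [e, ← mv_resid]
  have e2 : M.mul (M.mul u (M.add x y)) (M.neg y)
      = M.mul u (M.mul (M.add x y) (M.neg y)) := by rw [M.mul_assoc]
  rw [e2]
  apply mv_mul_le_mul_left
  have e3 : M.mul (M.add x y) (M.neg y) = M.inf (M.neg y) x := by
    show _ = M.mul (M.neg y) (M.add (M.neg (M.neg y)) x)
    rw [M.neg_neg, M.mul_comm, M.add_comm x y]
  rw [e3]
  exact mv_inf_le_right _ _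

/-- (x→a)⊙(y→b) ≤ (x⊕y)→(a⊕b). -/
lemma mv_add_imp (x y a b : A) :
    M.le (M.mul (M.add (M.neg x) a) (M.add (M.neg y) b))
      (M.add (M.neg (M.add x y)) (M.add a b)) := by
  set X := M.add (M.neg x) a with hX
  set Y := M.add (M.neg y) b with hYY
  rw [← mv_resid]
  have e : M.mul (M.mul X Y) (M.add x y) = M.mul Y (M.mul X (M.add x y)) := by
    rw [M.mul_comm X Y, ← M.mul_assoc]
  rw [e]
  have h1 : M.le (M.mul X (M.add x y)) (M.add (M.mul X x) y) := mv_exchange X x y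
  have h2 : M.le (M.mul X x) a := by
    rw [M.mul_comm]
    show M.le (M.inf x a) a
    exact mv_inf_le_right _ _
  have h3 : M.le (M.mul X (M.add x y)) (M.add a y) :=
    mv_le_trans h1 (mv_add_le_add_right h2 y)
  have h4 : M.le (M.mul Y (M.mul X (M.add x y))) (M.mul Y (M.add a y)) :=
    mv_mul_le_mul_left h3 Y
  have h5 : M.le (M.mul Y (M.add a y)) (M.add (M.mul Y y) a) := by
    have := mv_exchange (M := M) Y y a
    rwa [M.add_comm a y]
  have h6 : M.le (M.mul Y y) b := by
    rw [M.mul_comm]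
    show M.le (M.inf y b) b
    exact mv_inf_le_right _ _
  have h7 : M.le (M.add (M.mul Y y) a) (M.add b a) := mv_add_le_add_right h6 a
  have h8 := mv_le_trans (mv_le_trans h4 h5) h7
  rwa [M.add_comm b a] at h8

end MVPow

section MVFilter
variable {A : Type*} {M : MVAlg A} {P : Set A}

lemma mv_exists_neg_mpow_mem (hP : IsMVFilter M P) (hproper : M.zero ∉ P)
    (hmax : ∀ F, IsMVFilter M F → M.zero ∉ F → P ⊆ F → F = P)
    {z : A} (hz : z ∉ P) : ∃ n, M.neg (mpow M z n) ∈ P := by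
  classical
  set F : Set A := {w | ∃ p ∈ P, ∃ n, M.le (M.mul p (mpow M z n)) w} with hF
  have hPF : P ⊆ F := by
    intro p hp
    exact ⟨p, hp, 0, by rw [show mpow M z 0 = M.one from rfl, M.mul_one]; exact mv_le_refl _⟩
  have hzF : z ∈ F := by
    refine ⟨M.one, hP.1, 1, ?_⟩
    rw [show mpow M z 1 = M.mul z (mpow M z 0) from rfl,
      show mpow M z 0 = M.one from rfl, M.mul_one, mv_one_mul]
    exact mv_le_refl _
  have hFfilter : IsMVFilter M F := by
    refine ⟨hPF hP.1, ?_, ?_⟩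
    · rintro a ⟨p, hp, n, hpn⟩ b ⟨q, hq, m, hqm⟩
      refine ⟨M.mul p q, hP.2.1 p hp q hq, n + m, ?_⟩
      have e : M.mul (M.mul p q) (mpow M z (n + m))
          = M.mul (M.mul p (mpow M z n)) (M.mul q (mpow M z m)) := by
        rw [mv_mpow_add, M.mul_assoc, M.mul_assoc,
          M.mul_comm (M.mul p q) (mpow M z n), M.mul_assoc,
          M.mul_comm (mpow M z n) p]
      rw [e]
      exact mv_le_trans (mv_mul_le_mul_right hpn _) (mv_mul_le_mul_left hqm _)
    · rintro a ⟨p, hp, n, hpn⟩ b hab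
      exact ⟨p, hp, n, mv_le_trans hpn hab⟩
  by_cases h0 : M.zero ∈ F
  · obtain ⟨p, hp, n, hpn⟩ := h0
    rw [mv_resid, M.add_zero] at hpn
    exact ⟨n, hP.2.2 p hp _ hpn⟩
  · exact absurd (by rw [hmax F hFfilter h0 hPF] at hzF; exact hzF) hz

lemma mv_linear (hP : IsMVFilter M P) (hproper : M.zero ∉ P)
    (hmax : ∀ F, IsMVFilter M F → M.zero ∉ F → P ⊆ F → F = P) (x y : A) :
    M.add (M.neg x) y ∈ P ∨ M.add (M.neg y) x ∈ P := by
  by_contra hcon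
  push_neg at hcon
  obtain ⟨h1, h2⟩ := hcon
  obtain ⟨n, hn⟩ := mv_exists_neg_mpow_mem hP hproper hmax h1
  obtain ⟨m, hm⟩ := mv_exists_neg_mpow_mem hP hproper hmax h2
  rw [mv_neg_mpow] at hn hm
  have ne1 : M.neg (M.add (M.neg x) y) = M.mul x (M.neg y) := by
    rw [M.neg_add, M.neg_neg]
  have ne2 : M.neg (M.add (M.neg y) x) = M.mul y (M.neg x) := by
    rw [M.neg_add, M.neg_neg]
  rw [ne1] at hn
  rw [ne2] at hm
  have hprod : M.mul (apow M (M.mul x (M.neg y)) n) (apow M (M.mul y (M.neg x)) m) ∈ P :=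
    hP.2.1 _ hn _ hm
  have hle : M.le (M.mul (apow M (M.mul x (M.neg y)) n) (apow M (M.mul y (M.neg x)) m)) M.zero := by
    have h := mv_mul_le_inf (M := M) (apow M (M.mul x (M.neg y)) n) (apow M (M.mul y (M.neg x)) m)
    rw [mv_inf_apow₂ (mv_crux x y) n m] at h
    exact h
  exact hproper (hP.2.2 _ hprod _ hle)

end MVFilter

section PavLemmas

def qzero : QI := ⟨0, ⟨le_refl 0, zero_le_one⟩⟩
def qone : QI := ⟨1, ⟨zero_le_one, le_refl 1⟩⟩

lemma qone_eq : qone = qneg qzero := Subtype.ext (by norm_num [qzero, qone, qneg])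

def qmpow (r : QI) : ℕ → QI
  | 0 => qone
  | n + 1 => qneg (qadd (qneg r) (qneg (qmpow r n)))

lemma qmpow_val (r : QI) : ∀ n, (qmpow r n).1 ≤ max (1 - n * (1 - r.1)) 0
  | 0 => by
      show (1 : ℚ) ≤ max (1 - 0 * (1 - r.1)) 0
      simp
  | n + 1 => by
      have ih := qmpow_val r n
      show 1 - min ((1 - r.1) + (1 - (qmpow r n).1)) 1 ≤ max (1 - (n+1 : ℕ) * (1 - r.1)) 0
      have h1 : (1 : ℚ) - r.1 ≥ 0 := by linarith [r.2.2]
      push_cast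
      rcases le_total ((1 - r.1) + (1 - (qmpow r n).1)) 1 with h | h
      · rw [min_eq_left h]
        rcases le_total (1 - (n:ℚ) * (1 - r.1)) 0 with h2 | h2
        · rw [max_eq_right h2] at ih
          have : (qmpow r n).1 ≤ 0 := ih
          refine le_trans ?_ (le_max_right _ _)
          linarith
        · rw [max_eq_left h2] at ih
          refine le_trans ?_ (le_max_left _ _)
          push_cast
          linarith
      · rw [min_eq_right h]
        simp
  
variable {A : Type*} {M : MVAlg A} (Pav : Pavelka M)

lemma bar_one : Pav.bar qone = M.one := by
  rw [qone_eq, Pav.bar_neg, show qzero = ⟨0, ⟨le_refl 0, zero_le_one⟩⟩ from rfl,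
    Pav.bar_zero, M.neg_zero]

lemma bar_qmpow (r : QI) : ∀ n, Pav.bar (qmpow r n) = mpow M (Pav.bar r) n
  | 0 => bar_one Pav
  | n + 1 => by
      show Pav.bar (qneg (qadd (qneg r) (qneg (qmpow r n)))) = M.mul (Pav.bar r) (mpow M (Pav.bar r) n)
      rw [Pav.bar_neg, Pav.bar_add, Pav.bar_neg, Pav.bar_neg, M.neg_add, M.neg_neg,
        M.neg_neg, bar_qmpow r n]

lemma bar_le {r s : QI} (h : r.1 ≤ s.1) : M.le (Pav.bar r) (Pav.bar s) := by
  have e : qadd (qneg r) s = qone := by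
    apply Subtype.ext
    show min ((1 - r.1) + s.1) 1 = 1
    rw [min_eq_right (by linarith)]
  show M.add (M.neg (Pav.bar r)) (Pav.bar s) = M.one
  rw [← Pav.bar_neg, ← Pav.bar_add, e, bar_one]

lemma mpow_mem {P : Set A} (hP : IsMVFilter M P) {a : A} (ha : a ∈ P) :
    ∀ n, mpow M a n ∈ P
  | 0 => hP.1
  | n + 1 => hP.2.1 a ha _ (mpow_mem hP ha n)

lemma bar_notMem {P : Set A} (hP : IsMVFilter M P) (hproper : M.zero ∉ P)
    {r : QI} (hr : r.1 < 1) : Pav.bar r ∉ P := by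
  intro hmem
  have hpos : 0 < 1 - r.1 := by linarith
  obtain ⟨n, hn⟩ := exists_nat_ge ((1 - r.1)⁻¹)
  have hn1 : (1 : ℚ) ≤ n * (1 - r.1) := by
    have h2 : (1 - r.1)⁻¹ * (1 - r.1) ≤ n * (1 - r.1) :=
      mul_le_mul_of_nonneg_right hn hpos.le
    rwa [inv_mul_cancel₀ (ne_of_gt hpos)] at h2
  have hval : (qmpow r n).1 = 0 := by
    have h1 := qmpow_val r n
    rw [max_eq_right (by linarith)] at h1
    exact le_antisymm h1 (qmpow r n).2.1
  have hq : qmpow r n = qzero := Subtype.ext hval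
  have : mpow M (Pav.bar r) n ∈ P := mpow_mem hP hmem n
  rw [← bar_qmpow, hq] at this
  rw [show qzero = ⟨0, ⟨le_refl 0, zero_le_one⟩⟩ from rfl, Pav.bar_zero] at this
  exact hproper this

end PavLemmas

section MainAux

/-- sSup of the image of a set under x ↦ 1 - x. -/
lemma sSup_one_sub (T : Set ℝ) (hne : T.Nonempty) (hbdd : BddBelow T) :
    sSup ((fun x => 1 - x) '' T) = 1 - sInf T := by
  apply IsLUB.csSup_eq _ (hne.image _)
  constructor
  · rintro y ⟨x, hx, rfl⟩
    have := csInf_le hbdd hx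
    show 1 - x ≤ 1 - sInf T
    linarith
  · intro b hb
    have h1 : 1 - b ≤ sInf T := by
      apply le_csInf hne
      intro x hx
      have h2 : 1 - x ≤ b := hb ⟨x, hx, rfl⟩
      linarith
    linarith

variable {A : Type*} {M : MVAlg A} (Pav : Pavelka M) (P : Set A)

def Sset (a : A) : Set ℝ :=
  {x : ℝ | ∃ r : QI, ((r.1 : ℝ)) = x ∧ M.add (M.neg (Pav.bar r)) a ∈ P}

def Tset (a : A) : Set ℝ :=
  {x : ℝ | ∃ r : QI, ((r.1 : ℝ)) = x ∧ M.add (M.neg a) (Pav.bar r) ∈ P}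

variable {Pav P}

lemma S_zero_mem (hP : IsMVFilter M P) (a : A) : (0 : ℝ) ∈ Sset Pav P a := by
  refine ⟨qzero, by norm_num [qzero], ?_⟩
  rw [show qzero = ⟨0, ⟨le_refl 0, zero_le_one⟩⟩ from rfl, Pav.bar_zero, M.neg_zero,
    mv_one_add]
  exact hP.1

lemma T_one_mem (hP : IsMVFilter M P) (a : A) : (1 : ℝ) ∈ Tset Pav P a := by
  refine ⟨qone, by norm_num [qone], ?_⟩
  rw [bar_one, M.add_one]
  exact hP.1

lemma S_bddAbove (a : A) : BddAbove (Sset Pav P a) := by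
  refine ⟨1, ?_⟩
  rintro x ⟨r, rfl, -⟩
  exact_mod_cast r.2.2

lemma T_bddBelow (a : A) : BddBelow (Tset Pav P a) := by
  refine ⟨0, ?_⟩
  rintro x ⟨r, rfl, -⟩
  exact_mod_cast r.2.1

lemma ST_le (hP : IsMVFilter M P) (hproper : M.zero ∉ P) {a : A} {x y : ℝ}
    (hx : x ∈ Sset Pav P a) (hy : y ∈ Tset Pav P a) : x ≤ y := by
  obtain ⟨r, rfl, hr⟩ := hx
  obtain ⟨s, rfl, hs⟩ := hy
  by_contra hcon
  push_neg at hcon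
  have hlt : s.1 < r.1 := by exact_mod_cast hcon
  have hprod := hP.2.1 _ hr _ hs
  have hsyl := mv_syl (M := M) (Pav.bar r) a (Pav.bar s)
  have hmem : M.add (M.neg (Pav.bar r)) (Pav.bar s) ∈ P := hP.2.2 _ hprod _ hsyl
  rw [← Pav.bar_neg, ← Pav.bar_add] at hmem
  refine bar_notMem Pav hP hproper ?_ hmem
  show min ((1 - r.1) + s.1) 1 < 1
  exact lt_of_le_of_lt (min_le_left _ _) (by linarith)

lemma dichotomy (hP : IsMVFilter M P) (hproper : M.zero ∉ P)
    (hmax : ∀ F, IsMVFilter M F → M.zero ∉ F → P ⊆ F → F = P) (a : A) (r : QI) :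
    ((r.1 : ℝ) ∈ Sset Pav P a) ∨ ((r.1 : ℝ) ∈ Tset Pav P a) := by
  rcases mv_linear hP hproper hmax (Pav.bar r) a with h | h
  · exact Or.inl ⟨r, rfl, h⟩
  · exact Or.inr ⟨r, rfl, h⟩

lemma mv_sup_eq_inf (hP : IsMVFilter M P) (hproper : M.zero ∉ P)
    (hmax : ∀ F, IsMVFilter M F → M.zero ∉ F → P ⊆ F → F = P) (a : A) :
    sSup (Sset Pav P a) = sInf (Tset Pav P a) := by
  apply le_antisymm
  · apply csSup_le ⟨0, S_zero_mem hP a⟩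
    intro x hx
    exact le_csInf ⟨1, T_one_mem hP a⟩ fun y hy => ST_le hP hproper hx hy
  · by_contra hcon
    push_neg at hcon
    obtain ⟨q, hq1, hq2⟩ := exists_rat_btwn hcon
    have h0 : (0 : ℝ) ≤ sSup (Sset Pav P a) := le_csSup (S_bddAbove a) (S_zero_mem hP a)
    have h1 : sInf (Tset Pav P a) ≤ 1 := csInf_le (T_bddBelow a) (T_one_mem hP a)
    have hq0 : (0 : ℚ) ≤ q := by
      have : (0 : ℝ) < (q : ℝ) := lt_of_le_of_lt h0 hq1
      exact_mod_cast this.le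
    have hq3 : (q : ℚ) ≤ 1 := by
      have : (q : ℝ) < 1 := lt_of_lt_of_le hq2 h1
      exact_mod_cast this.le
    set r : QI := ⟨q, hq0, hq3⟩ with hr
    rcases dichotomy hP hproper hmax a r with h | h
    · exact absurd (le_csSup (S_bddAbove a) h) (not_le.mpr hq1)
    · exact absurd (csInf_le (T_bddBelow a) h) (not_le.mpr hq2)

lemma Sset_neg_eq (a : A) :
    Sset Pav P (M.neg a) = (fun x => 1 - x) '' (Tset Pav P a) := by
  ext x
  constructor
  · rintro ⟨r, rfl, hr⟩
    refine ⟨((qneg r).1 : ℝ), ⟨qneg r, rfl, ?_⟩, ?_⟩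
    · rw [Pav.bar_neg, M.add_comm]
      exact hr
    · show 1 - ((1 - r.1 : ℚ) : ℝ) = (r.1 : ℝ)
      push_cast
      ring
  · rintro ⟨y, ⟨s, rfl, hs⟩, rfl⟩
    refine ⟨qneg s, ?_, ?_⟩
    · show (((1 - s.1 : ℚ)) : ℝ) = 1 - (s.1 : ℝ)
      push_cast
      ring
    · rw [Pav.bar_neg, M.neg_neg, M.add_comm]
      exact hs

end MainAux

section MainAux2
variable {A : Type*} {M : MVAlg A} {Pav : Pavelka M} {P : Set A}

lemma S_add_mem (hP : IsMVFilter M P) {a b : A} {x y : ℝ}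
    (hx : x ∈ Sset Pav P a) (hy : y ∈ Sset Pav P b) :
    min (x + y) 1 ∈ Sset Pav P (M.add a b) := by
  obtain ⟨r, rfl, hr⟩ := hx
  obtain ⟨s, rfl, hs⟩ := hy
  refine ⟨qadd r s, ?_, ?_⟩
  · show ((min (r.1 + s.1) 1 : ℚ) : ℝ) = min ((r.1 : ℝ) + (s.1 : ℝ)) 1
    rw [Rat.cast_min, Rat.cast_add, Rat.cast_one]
  · have himp := mv_add_imp (M := M) (Pav.bar r) (Pav.bar s) a b
    have hprod := hP.2.1 _ hr _ hs
    have hm := hP.2.2 _ hprod _ himp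
    rw [← Pav.bar_add] at hm
    exact hm

lemma T_add_mem (hP : IsMVFilter M P) {a b : A} {x y : ℝ}
    (hx : x ∈ Tset Pav P a) (hy : y ∈ Tset Pav P b) :
    min (x + y) 1 ∈ Tset Pav P (M.add a b) := by
  obtain ⟨r, rfl, hr⟩ := hx
  obtain ⟨s, rfl, hs⟩ := hy
  refine ⟨qadd r s, ?_, ?_⟩
  · show ((min (r.1 + s.1) 1 : ℚ) : ℝ) = min ((r.1 : ℝ) + (s.1 : ℝ)) 1
    rw [Rat.cast_min, Rat.cast_add, Rat.cast_one]
  · have himp := mv_add_imp (M := M) a b (Pav.bar r) (Pav.bar s)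
    have hprod := hP.2.1 _ hr _ hs
    have hm := hP.2.2 _ hprod _ himp
    rw [← Pav.bar_add] at hm
    exact hm

lemma v_neg (hP : IsMVFilter M P) (hproper : M.zero ∉ P)
    (hmax : ∀ F, IsMVFilter M F → M.zero ∉ F → P ⊆ F → F = P) (a : A) :
    sSup (Sset Pav P (M.neg a)) = 1 - sSup (Sset Pav P a) := by
  rw [Sset_neg_eq, sSup_one_sub _ ⟨1, T_one_mem hP a⟩ (T_bddBelow a),
    ← mv_sup_eq_inf hP hproper hmax a]

lemma v_add (hP : IsMVFilter M P) (hproper : M.zero ∉ P)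
    (hmax : ∀ F, IsMVFilter M F → M.zero ∉ F → P ⊆ F → F = P) (a b : A) :
    sSup (Sset Pav P (M.add a b))
      = min (sSup (Sset Pav P a) + sSup (Sset Pav P b)) 1 := by
  apply le_antisymm
  · apply le_min
    · rw [mv_sup_eq_inf hP hproper hmax (M.add a b), mv_sup_eq_inf hP hproper hmax a,
        mv_sup_eq_inf hP hproper hmax b]
      have key : ∀ x ∈ Tset Pav P a, ∀ y ∈ Tset Pav P b,
          sInf (Tset Pav P (M.add a b)) ≤ x + y := by
        intro x hx y hy
        have h1 := csInf_le (T_bddBelow _) (T_add_mem hP hx hy)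
        exact le_trans h1 (min_le_left _ _)
      have h2 : ∀ x ∈ Tset Pav P a,
          sInf (Tset Pav P (M.add a b)) - x ≤ sInf (Tset Pav P b) := by
        intro x hx
        apply le_csInf ⟨1, T_one_mem hP b⟩
        intro y hy
        linarith [key x hx y hy]
      have h3 : sInf (Tset Pav P (M.add a b)) - sInf (Tset Pav P b)
          ≤ sInf (Tset Pav P a) := by
        apply le_csInf ⟨1, T_one_mem hP a⟩
        intro x hx
        linarith [h2 x hx]
      linarith
    · apply csSup_le ⟨0, S_zero_mem hP _⟩
      rintro x ⟨r, rfl, -⟩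
      exact_mod_cast r.2.2
  · rcases le_or_gt (sSup (Sset Pav P a) + sSup (Sset Pav P b)) 1 with h | h
    · rw [min_eq_left h]
      have h2 : ∀ x ∈ Sset Pav P a,
          sSup (Sset Pav P b) ≤ sSup (Sset Pav P (M.add a b)) - x := by
        intro x hx
        apply csSup_le ⟨0, S_zero_mem hP b⟩
        intro y hy
        have hx1 : x ≤ sSup (Sset Pav P a) := le_csSup (S_bddAbove a) hx
        have hy1 : y ≤ sSup (Sset Pav P b) := le_csSup (S_bddAbove b) hy
        have hmem := S_add_mem hP hx hy
        rw [min_eq_left (by linarith)] at hmem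
        have := le_csSup (S_bddAbove (M.add a b)) hmem
        linarith
      have h3 : sSup (Sset Pav P a)
          ≤ sSup (Sset Pav P (M.add a b)) - sSup (Sset Pav P b) := by
        apply csSup_le ⟨0, S_zero_mem hP a⟩
        intro x hx
        linarith [h2 x hx]
      linarith
    · rw [min_eq_right h.le]
      have hεpos : 0 < (sSup (Sset Pav P a) + sSup (Sset Pav P b) - 1) / 2 := by
        linarith
      obtain ⟨x, hx, hxlt⟩ := exists_lt_of_lt_csSup ⟨0, S_zero_mem hP a⟩
        (show sSup (Sset Pav P a) - (sSup (Sset Pav P a) + sSup (Sset Pav P b) - 1) / 2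
            < sSup (Sset Pav P a) by linarith)
      obtain ⟨y, hy, hylt⟩ := exists_lt_of_lt_csSup ⟨0, S_zero_mem hP b⟩
        (show sSup (Sset Pav P b) - (sSup (Sset Pav P a) + sSup (Sset Pav P b) - 1) / 2
            < sSup (Sset Pav P b) by linarith)
      have hxy : 1 ≤ x + y := by linarith
      have hmem := S_add_mem hP hx hy
      rw [min_eq_right hxy] at hmem
      exact le_csSup (S_bddAbove _) hmem

lemma v_mul (hP : IsMVFilter M P) (hproper : M.zero ∉ P)
    (hmax : ∀ F, IsMVFilter M F → M.zero ∉ F → P ⊆ F → F = P) (a b : A) :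
    sSup (Sset Pav P (M.mul a b))
      = max (sSup (Sset Pav P a) + sSup (Sset Pav P b) - 1) 0 := by
  have e : M.mul a b = M.neg (M.add (M.neg a) (M.neg b)) := by
    rw [M.neg_add, M.neg_neg, M.neg_neg]
  rw [e, v_neg hP hproper hmax, v_add hP hproper hmax,
    v_neg hP hproper hmax, v_neg hP hproper hmax]
  rcases le_total (sSup (Sset Pav P a) + sSup (Sset Pav P b)) 1 with h | h
  · rw [min_eq_right (by linarith), max_eq_right (by linarith)]
    ring
  · rw [min_eq_left (by linarith), max_eq_left (by linarith)]
    ring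

end MainAux2


/-- For a maximal proper filter P of a Pavelka algebra, the truth value
[a]_P = sup { r ∈ L : r̄ → a ∈ P } (computed in ℝ) equals
inf { r ∈ L : a → r̄ ∈ P }, and a ↦ [a]_P preserves ⊕, ⊙ and ¬, the values being
computed in the standard MV algebra [0,1]. -/
theorem pavelka_truth_value_hom {A : Type*} (M : MVAlg A) (Pav : Pavelka M)
    (P : Set A) (hP : IsMVFilter M P) (hproper : M.zero ∉ P)
    (hmax : ∀ F, IsMVFilter M F → M.zero ∉ F → P ⊆ F → F = P) :
    let v : A → ℝ := fun a =>
      sSup {x : ℝ | ∃ r : QI, ((r.1 : ℝ)) = x ∧ M.add (M.neg (Pav.bar r)) a ∈ P}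
    (∀ a : A, v a =
      sInf {x : ℝ | ∃ r : QI, ((r.1 : ℝ)) = x ∧ M.add (M.neg a) (Pav.bar r) ∈ P}) ∧
    (∀ a b : A, v (M.add a b) = min (v a + v b) 1) ∧
    (∀ a b : A, v (M.mul a b) = max (v a + v b - 1) 0) ∧
    (∀ a : A, v (M.neg a) = 1 - v a) := by 
  intro v
  refine ⟨fun a => ?_, fun a b => ?_, fun a b => ?_, fun a => ?_⟩
  · exact mv_sup_eq_inf hP hproper hmax a
  · exact v_add hP hproper hmax a b
  · exact v_mul hP hproper hmax a b
  · exact v_neg hP hproper hmax a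
end
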